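/- Capacity of RIR_max (Corollary 2): for all integers N ≥ 2 and K ≥ 1, the supremum of the rate R = L_w/(N·L_x) over all RIR_max schemes with K messages and N databases equals C_K(N) = (1 + 1/N + 1/N² + ⋯ + 1/N^{K−1})^{−1}, and this supremum is attained; in particular the capacity of RIR_max equals the capacity of PIR_max. -/

import Mathlib

open scoped BigOperators

noncomputable section

/-- A finite probability space: a finite type together with a probability mass function. -/
structure FinProbSpace where
  Ω : Type
  [fin : Fintype Ω]
  p : Ω → ℝ
  nonneg : ∀ ω, 0 ≤ p ω
  sum_one : ∑ ω, p ω = 1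

attribute [instance] FinProbSpace.fin

namespace FinProbSpace

variable (P : FinProbSpace)

/-- Probability that the random variable `X` takes the value `a`. -/
def prob {α : Type} [DecidableEq α] (X : P.Ω → α) (a : α) : ℝ :=
  ∑ ω, if X ω = a then P.p ω else 0

/-- Shannon entropy (in bits) of a finitely valued random variable. -/
def H {α : Type} [Fintype α] [DecidableEq α] (X : P.Ω → α) : ℝ :=
  ∑ a, -(P.prob X a * Real.logb 2 (P.prob X a))

/-- Conditional Shannon entropy `H(X | Y) = H(X, Y) - H(Y)` (in bits). -/
def condH {α β : Type} [Fintype α] [DecidableEq α] [Fintype β] [DecidableEq β]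
    (X : P.Ω → α) (Y : P.Ω → β) : ℝ :=
  P.H (fun ω => (X ω, Y ω)) - P.H Y

/-- The tuple random variable `(X_i)_{i ∈ ι}`. -/
def tuple {ι V : Type} (X : ι → P.Ω → V) : P.Ω → ι → V := fun ω i => X i ω

/-- Joint (mutual) independence of a finite family of random variables. -/
def iIndep {ι V : Type} [Fintype ι] [DecidableEq ι] [DecidableEq V] (X : ι → P.Ω → V) : Prop :=
  ∀ a : ι → V, P.prob (P.tuple X) a = ∏ i, P.prob (X i) (a i)

/-- `X` and `Y` contain the same information about everything beyond `Z`: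
`H(X | Y, Z) = H(Y | X, Z) = 0`. -/
def sameInfo {α β γ : Type} [Fintype α] [DecidableEq α] [Fintype β] [DecidableEq β]
    [Fintype γ] [DecidableEq γ] (X : P.Ω → α) (Y : P.Ω → β) (Z : P.Ω → γ) : Prop :=
  P.condH X (fun ω => (Y ω, Z ω)) = 0 ∧ P.condH Y (fun ω => (X ω, Z ω)) = 0

end FinProbSpace

/-- A locally decodable code with `K` source symbols of entropy `Lw`, `M` coded symbols of
entropy `Lx`, and locality `N`. -/
structure LDC (K N M : ℕ) (Lw Lx : ℝ) where
  P : FinProbSpace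
  V : Type
  [fV : Fintype V]
  [dV : DecidableEq V]
  V' : Type
  [fV' : Fintype V']
  [dV' : DecidableEq V']
  /-- the source symbols -/
  W : Fin K → P.Ω → V
  /-- the coded symbols -/
  X : Fin M → P.Ω → V'
  indep : P.iIndep W
  HW : ∀ k, P.H (W k) = Lw
  coded_fn : ∀ m, ∃ f : (Fin K → V) → V', ∀ ω, X m ω = f (fun k => W k ω)
  HX : ∀ m, P.H (X m) = Lx
  /-- the decoding supersets -/
  decSets : Fin K → Finset (Finset (Fin M))
  decSets_nonempty : ∀ k, (decSets k).Nonempty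
  decSets_card : ∀ k, ∀ s ∈ decSets k, s.card = N
  decodes : ∀ k, ∀ s ∈ decSets k,
    P.condH (W k) (P.tuple fun i : {x // x ∈ s} => X i.1) = 0

attribute [instance] LDC.fV LDC.dV LDC.fV' LDC.dV'

/-- A universal LDC: every coded symbol appears in some decoding set of every source symbol. -/
def LDC.IsUniversal {K N M : ℕ} {Lw Lx : ℝ} (C : LDC K N M Lw Lx) : Prop :=
  ∀ (m : Fin M) (k : Fin K), ∃ s ∈ C.decSets k, m ∈ s

/-- A perfectly smooth LDC: for each source symbol, every coded symbol lies in the same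
number of decoding sets. -/
def LDC.IsSmooth {K N M : ℕ} {Lw Lx : ℝ} (C : LDC K N M Lw Lx) : Prop :=
  ∀ (k : Fin K) (m m' : Fin M),
    ((C.decSets k).filter (fun s => m ∈ s)).card =
      ((C.decSets k).filter (fun s => m' ∈ s)).card

/-- `C*(N, K) = N (1 + 1/N + ⋯ + 1/N^{K-1})⁻¹`. -/
def Cstar (N K : ℕ) : ℝ := N / (∑ j ∈ Finset.range K, (1 / (N : ℝ)) ^ j)

/-- An `N`-query information retrieval scheme with `K` messages of entropy `Lw` and
answer sets of sizes `Mn n` with answers of entropy `Lx`. -/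
structure IRScheme (K N : ℕ) (Mn : Fin N → ℕ) (Lw Lx : ℝ) where
  P : FinProbSpace
  V : Type
  [fV : Fintype V]
  [dV : DecidableEq V]
  V' : Type
  [fV' : Fintype V']
  [dV' : DecidableEq V']
  /-- the messages -/
  W : Fin K → P.Ω → V
  /-- `A n m` is the `m`-th possible answer of database `n` -/
  A : (n : Fin N) → Fin (Mn n) → P.Ω → V'
  indep : P.iIndep W
  HW : ∀ k, P.H (W k) = Lw
  ans_fn : ∀ n m, ∃ f : (Fin K → V) → V', ∀ ω, A n m ω = f (fun k => W k ω)
  HA : ∀ n m, P.H (A n m) = Lx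
  /-- the decoding supersets: each decoding set consists of one answer index per database -/
  Q : Fin K → Finset ((n : Fin N) → Fin (Mn n))
  Q_nonempty : ∀ k, (Q k).Nonempty
  decodes : ∀ k, ∀ q ∈ Q k, P.condH (W k) (P.tuple fun n => A n (q n)) = 0

attribute [instance] IRScheme.fV IRScheme.dV IRScheme.fV' IRScheme.dV'

/-- A repudiative (RIR_max) scheme: every possible answer of every database appears in some
decoding set of every message. -/
def IRScheme.IsRIR {K N : ℕ} {Mn : Fin N → ℕ} {Lw Lx : ℝ} (C : IRScheme K N Mn Lw Lx) : Prop :=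
  ∀ (n : Fin N) (m : Fin (Mn n)) (k : Fin K), ∃ q ∈ C.Q k, q n = m

/-- A perfectly private (PIR_max) scheme: for each message there is a distribution on its
decoding sets such that the marginal distribution of the query to each database does not
depend on the message. -/
def IRScheme.IsPIR {K N : ℕ} {Mn : Fin N → ℕ} {Lw Lx : ℝ} (C : IRScheme K N Mn Lw Lx) : Prop :=
  ∃ μ : Fin K → ((n : Fin N) → Fin (Mn n)) → ℝ,
    (∀ k q, 0 ≤ μ k q) ∧ (∀ k, ∑ q ∈ C.Q k, μ k q = 1) ∧
    (∀ (k k' : Fin K) (n : Fin N) (m : Fin (Mn n)),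
      ∑ q ∈ (C.Q k).filter (fun q => q n = m), μ k q =
        ∑ q ∈ (C.Q k').filter (fun q => q n = m), μ k' q)

/-- `C_K(N) = (1 + 1/N + ⋯ + 1/N^{K-1})⁻¹`, the capacity of PIR. -/
def CK (N K : ℕ) : ℝ := (∑ j ∈ Finset.range K, (1 / (N : ℝ)) ^ j)⁻¹

/-!
Write `Z j` for the first `j` messages and `A q` for the answers selected by a decoding set `q`.
If `q` decodes message `j`, then `A q` determines `W j`, which is independent of `Z j`, so
`H(A q | Z j) = Lw + H(A q | Z (j+1))`. Bounding the left side by the sum of the `N` single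
answers and the right side from below by any one of them gives, for the largest entropy `g j`
of a single answer given `Z j`, the recursion `Lw + g (j+1) ≤ N g j`: repudiation is what
puts the maximizing answer into a decoding set of message `j`. For PIR schemes the same
recursion holds for the average over the query distribution, which by privacy does not depend
on the message. Iterating from `g 0 ≤ Lx` down to `g K ≥ 0` gives
`Lw (1 + 1/N + ⋯ + 1/N^(K-1)) ≤ N Lx`.

The bound is attained by a linear scheme over `ZMod N`. The queries are the points
`m ∈ (ZMod N)^K`, and message `k` consists of bits `W k (c, u)` with `c ≠ 0`; the answer to `m`
has one bit for each nonzero `e`, namely `∑_{e k ≠ 0} W k (e k, m + e - (e k) δ_k)`. If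
`c = e k ≠ 0`, the bit for `e` at `m` and the bit for `e - c δ_k` at `m + c δ_k` differ by
exactly the symbol `W k (c, m + e - c δ_k)`, so the `N` points of any line in direction `k`
decode `W k`. Every point lies on exactly one line of each direction, which makes the scheme
both repudiative and, with the uniform distribution on lines, private; its rate is
`(N - 1) N^K / (N (N^K - 1)) = C_K(N)`.
-/

open Finset Real

/-! ## Entropy inequalities -/

namespace Real

theorem negMulLog_sum_le_sum_negMulLog {ι : Type*} (s : Finset ι) {g : ι → ℝ}
    (hg : ∀ i ∈ s, 0 ≤ g i) : negMulLog (∑ i ∈ s, g i) ≤ ∑ i ∈ s, negMulLog (g i) := by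
  rw [negMulLog, neg_mul, sum_mul, ← sum_neg_distrib]
  refine sum_le_sum fun i hi => ?_
  rw [negMulLog, neg_mul, neg_le_neg_iff]
  rcases (hg i hi).eq_or_lt with h0 | hpos
  · simp [← h0]
  · exact mul_le_mul_of_nonneg_left (log_le_log hpos (single_le_sum hg hi)) hpos.le

theorem mul_log_add_log_sub_le {p a b c : ℝ} (hp : 0 ≤ p) (ha : p ≤ a) (hb : p ≤ b)
    (hc : p ≤ c) : p * (log a + log b - log p - log c) ≤ a * b / c - p := by
  rcases hp.eq_or_lt with rfl | hp
  · simpa using div_nonneg (mul_nonneg ha hb) hc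
  have ha : 0 < a := hp.trans_le ha
  have hb : 0 < b := hp.trans_le hb
  have hc : 0 < c := hp.trans_le hc
  have hlog : log a + log b - log p - log c = log (a * b / (p * c)) := by
    rw [log_div (by positivity) (by positivity), log_mul ha.ne' hb.ne', log_mul hp.ne' hc.ne']
    ring
  calc p * (log a + log b - log p - log c) ≤ p * (a * b / (p * c) - 1) := by
        rw [hlog]
        exact mul_le_mul_of_nonneg_left (log_le_sub_one_of_pos (by positivity)) hp.le
    _ = a * b / c - p := by field_simp

theorem sum_negMulLog_submodular {α β γ : Type*} [Fintype α] [Fintype β] [Fintype γ]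
    (f : α → β → γ → ℝ) (hf : ∀ x y z, 0 ≤ f x y z) :
    ∑ x, ∑ y, ∑ z, negMulLog (f x y z) + ∑ z, negMulLog (∑ x, ∑ y, f x y z) ≤
      ∑ x, ∑ z, negMulLog (∑ y, f x y z) + ∑ y, ∑ z, negMulLog (∑ x, f x y z) := by
  set a := fun x z => ∑ y, f x y z
  set b := fun y z => ∑ x, f x y z
  set c := fun z => ∑ x, ∑ y, f x y z
  have ha : ∀ x y z, f x y z ≤ a x z := fun x y z =>
    single_le_sum (fun y _ => hf x y z) (mem_univ y)
  have hb : ∀ x y z, f x y z ≤ b y z := fun x y z =>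
    single_le_sum (fun x _ => hf x y z) (mem_univ x)
  have hc : ∀ x y z, f x y z ≤ c z := fun x y z => (ha x y z).trans
    (single_le_sum (f := fun x => a x z) (fun x _ => sum_nonneg fun y _ => hf x y z)
      (mem_univ x))
  have hcomm : ∀ g : α → β → γ → ℝ, ∑ x, ∑ y, ∑ z, g x y z = ∑ z, ∑ x, ∑ y, g x y z :=
    fun g => (sum_congr rfl fun x _ => sum_comm).trans sum_comm
  -- each marginal `m` satisfies `m log m = ∑ f log m` over the variables it forgets
  have hZ : ∑ z, c z * log (c z) = ∑ x, ∑ y, ∑ z, f x y z * log (c z) := by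
    simp only [c, sum_mul]
    exact (hcomm _).symm
  have hXZ : ∑ x, ∑ z, a x z * log (a x z) = ∑ x, ∑ y, ∑ z, f x y z * log (a x z) := by
    simp only [a, sum_mul]
    exact sum_congr rfl fun x _ => sum_comm
  have hYZ : ∑ y, ∑ z, b y z * log (b y z) = ∑ x, ∑ y, ∑ z, f x y z * log (b y z) := by
    simp only [b, sum_mul]
    exact (sum_congr rfl fun y _ => sum_comm).trans sum_comm
  have hmarg : ∀ z, ∑ x, ∑ y, a x z * b y z / c z = c z := fun z =>
    calc _ = (∑ x, a x z) * (∑ y, b y z) / c z := by simp only [sum_mul_sum, sum_div]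
      _ = c z := by
          rw [show ∑ y, b y z = c z from sum_comm]
          exact mul_self_div_self _
  have hgibbs :
      ∑ x, ∑ y, ∑ z, f x y z * (log (a x z) + log (b y z) - log (f x y z) - log (c z)) ≤ 0 :=
    calc _ ≤ ∑ x, ∑ y, ∑ z, (a x z * b y z / c z - f x y z) :=
          sum_le_sum fun x _ => sum_le_sum fun y _ => sum_le_sum fun z _ =>
            mul_log_add_log_sub_le (hf x y z) (ha x y z) (hb x y z) (hc x y z)
      _ = 0 := by
          rw [hcomm]
          simp only [sum_sub_distrib, hmarg]
          exact sub_self _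
  simp only [negMulLog, neg_mul, sum_neg_distrib]
  simp only [mul_add, mul_sub, sum_add_distrib, sum_sub_distrib] at hgibbs
  linarith

end Real

namespace FinProbSpace

variable {P : FinProbSpace}

theorem prob_nonneg {α : Type} [DecidableEq α] (X : P.Ω → α) (a : α) : 0 ≤ P.prob X a :=
  sum_nonneg fun ω _ => by split <;> simp [P.nonneg]

theorem prob_eq_sum_prob_fiber {α β : Type} [Fintype α] [DecidableEq α] [DecidableEq β]
    {X : P.Ω → α} {Y : P.Ω → β} (f : α → β) (hY : ∀ ω, Y ω = f (X ω)) (b : β) :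
    P.prob Y b = ∑ a with f a = b, P.prob X a := by
  unfold prob
  rw [sum_comm]
  refine sum_congr rfl fun ω _ => ?_
  rw [sum_ite_eq (univ.filter (f · = b)) (X ω) (fun _ => P.p ω)]
  simp [hY ω]

theorem sum_prob_pair_left {α β : Type} [Fintype α] [DecidableEq α] [DecidableEq β]
    (X : P.Ω → α) (Y : P.Ω → β) (b : β) :
    ∑ a, P.prob (fun ω => (X ω, Y ω)) (a, b) = P.prob Y b := by
  unfold prob
  rw [sum_comm]
  exact sum_congr rfl fun ω _ => by simp [Prod.ext_iff, ite_and]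

theorem sum_prob_triple_middle {α β γ : Type} [DecidableEq α] [Fintype β] [DecidableEq β]
    [DecidableEq γ] (X : P.Ω → α) (Y : P.Ω → β) (Z : P.Ω → γ) (a : α) (c : γ) :
    ∑ b, P.prob (fun ω => (X ω, Y ω, Z ω)) (a, b, c) = P.prob (fun ω => (X ω, Z ω)) (a, c) := by
  unfold prob
  rw [sum_comm]
  exact sum_congr rfl fun ω _ => by simp [Prod.ext_iff, ite_and]

variable {α β γ : Type} [Fintype α] [DecidableEq α] [Fintype β] [DecidableEq β]
  [Fintype γ] [DecidableEq γ]

theorem sum_prob (X : P.Ω → α) : ∑ a, P.prob X a = 1 := by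
  unfold prob
  rw [sum_comm, ← P.sum_one]
  exact sum_congr rfl fun ω _ => by simp

theorem H_eq_sum_negMulLog (X : P.Ω → α) :
    P.H X = (∑ a, negMulLog (P.prob X a)) / log 2 := by
  simp only [H, sum_div, negMulLog, logb]
  exact sum_congr rfl fun a _ => by ring

theorem H_comp_le {X : P.Ω → α} {Y : P.Ω → β} (f : α → β) (hY : ∀ ω, Y ω = f (X ω)) :
    P.H Y ≤ P.H X := by
  rw [H_eq_sum_negMulLog, H_eq_sum_negMulLog, ← sum_fiberwise univ f]
  gcongr with b
  rw [prob_eq_sum_prob_fiber f hY]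
  exact negMulLog_sum_le_sum_negMulLog _ fun a _ => prob_nonneg X a

theorem H_congr {X : P.Ω → α} {Y : P.Ω → β} (f : α → β) (g : β → α)
    (hY : ∀ ω, Y ω = f (X ω)) (hX : ∀ ω, X ω = g (Y ω)) : P.H X = P.H Y :=
  (H_comp_le g hX).antisymm (H_comp_le f hY)

theorem H_triple_add_le (X : P.Ω → α) (Y : P.Ω → β) (Z : P.Ω → γ) :
    P.H (fun ω => (X ω, Y ω, Z ω)) + P.H Z ≤
      P.H (fun ω => (X ω, Z ω)) + P.H (fun ω => (Y ω, Z ω)) := by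
  have h := sum_negMulLog_submodular (fun x y z => P.prob (fun ω => (X ω, Y ω, Z ω)) (x, y, z))
    fun x y z => prob_nonneg _ _
  simp only [sum_prob_triple_middle, sum_prob_pair_left] at h
  simp only [H_eq_sum_negMulLog, Fintype.sum_prod_type, ← add_div]
  gcongr

theorem condH_nonneg (X : P.Ω → α) (Y : P.Ω → β) : 0 ≤ P.condH X Y :=
  sub_nonneg.mpr (H_comp_le Prod.snd fun _ => rfl)

theorem condH_eq_zero_of_eq_comp {X : P.Ω → α} {Y : P.Ω → β} (f : β → α)
    (h : ∀ ω, X ω = f (Y ω)) : P.condH X Y = 0 := by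
  rw [condH, sub_eq_zero]
  exact H_congr (X := fun ω => (X ω, Y ω)) Prod.snd (fun b => (f b, b)) (fun _ => rfl)
    fun ω => by rw [h]

theorem H_const (c : α) : P.H (fun _ => c) = 0 := by
  simp [H, prob, P.sum_one, apply_ite]

theorem condH_const (X : P.Ω → α) (c : β) : P.condH X (fun _ => c) = P.H X := by
  rw [condH, H_const, sub_zero]
  exact H_congr Prod.fst (fun a => (a, c)) (fun _ => rfl) fun _ => rfl

theorem condH_congr_left {α' : Type} [Fintype α'] [DecidableEq α'] {X : P.Ω → α}
    {X' : P.Ω → α'} {Y : P.Ω → β} (f : α → α') (g : α' → α)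
    (hX' : ∀ ω, X' ω = f (X ω)) (hX : ∀ ω, X ω = g (X' ω)) : P.condH X Y = P.condH X' Y := by
  rw [condH, condH, H_congr (X := fun ω => (X ω, Y ω)) (Y := fun ω => (X' ω, Y ω))
    (fun t => (f t.1, t.2)) (fun t => (g t.1, t.2)) (fun ω => by rw [hX']) fun ω => by rw [hX]]

theorem condH_congr_right {β' : Type} [Fintype β'] [DecidableEq β'] {X : P.Ω → α}
    {Y : P.Ω → β} {Y' : P.Ω → β'} (f : β → β') (g : β' → β)
    (hY' : ∀ ω, Y' ω = f (Y ω)) (hY : ∀ ω, Y ω = g (Y' ω)) : P.condH X Y = P.condH X Y' := by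
  rw [condH, condH, H_congr (X := fun ω => (X ω, Y ω)) (Y := fun ω => (X ω, Y' ω))
    (fun t => (t.1, f t.2)) (fun t => (t.1, g t.2)) (fun ω => by rw [hY']) fun ω => by rw [hY],
    H_congr f g hY' hY]

theorem condH_le_of_eq_comp {α' : Type} [Fintype α'] [DecidableEq α'] {X : P.Ω → α}
    {X' : P.Ω → α'} (f : α' → α) (hX : ∀ ω, X ω = f (X' ω)) (Y : P.Ω → β) :
    P.condH X Y ≤ P.condH X' Y :=
  sub_le_sub_right (H_comp_le (fun t => (f t.1, t.2)) fun ω => by rw [hX]) _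

theorem condH_pair_le_right (X : P.Ω → α) (Y : P.Ω → β) (Z : P.Ω → γ) :
    P.condH X (fun ω => (Y ω, Z ω)) ≤ P.condH X Z := by
  have := H_triple_add_le X Y Z
  rw [condH, condH]
  linarith

theorem condH_pair_le_left (X : P.Ω → α) (Y : P.Ω → β) (Z : P.Ω → γ) :
    P.condH X (fun ω => (Y ω, Z ω)) ≤ P.condH X Y := by
  rw [condH_congr_right Prod.swap Prod.swap (fun _ => rfl) fun _ => rfl]
  exact condH_pair_le_right X Z Y

theorem condH_le_H (X : P.Ω → α) (Y : P.Ω → β) : P.condH X Y ≤ P.H X := by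
  rw [← condH_const X (), condH_congr_right (fun b => ((), b)) Prod.snd (fun _ => rfl)
    fun _ => rfl]
  exact condH_pair_le_left X (fun _ => ()) Y

theorem condH_pair_le_add (X : P.Ω → α) (Y : P.Ω → β) (Z : P.Ω → γ) :
    P.condH (fun ω => (X ω, Y ω)) Z ≤ P.condH X Z + P.condH Y Z := by
  have := H_triple_add_le X Y Z
  have hassoc : P.H (fun ω => ((X ω, Y ω), Z ω)) = P.H (fun ω => (X ω, Y ω, Z ω)) :=
    H_congr (fun t => (t.1.1, t.1.2, t.2)) (fun t => ((t.1, t.2.1), t.2.2))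
      (fun _ => rfl) fun _ => rfl
  rw [condH, condH, condH, hassoc]
  linarith

theorem condH_tuple_le_sum {V : Type} [Fintype V] [DecidableEq V] :
    ∀ {n : ℕ} (X : Fin n → P.Ω → V) (Z : P.Ω → γ),
      P.condH (P.tuple X) Z ≤ ∑ i, P.condH (X i) Z
  | 0, X, Z => by
    rw [condH_eq_zero_of_eq_comp (fun _ => finZeroElim) fun ω => funext finZeroElim]
    simp
  | n + 1, X, Z => by
    rw [condH_congr_left (X' := fun ω => (X 0 ω, P.tuple (Fin.tail X) ω))
      (fun t => (t 0, Fin.tail t)) (fun u => Fin.cons (α := fun _ => V) u.1 u.2)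
      (fun _ => rfl) fun ω => (Fin.cons_self_tail (P.tuple X ω)).symm, Fin.sum_univ_succ]
    exact (condH_pair_le_add _ _ Z).trans (add_le_add le_rfl (condH_tuple_le_sum (Fin.tail X) Z))

theorem condH_eq_H_of_prob_pair_eq_mul {X : P.Ω → α} {Y : P.Ω → β}
    (h : ∀ a b, P.prob (fun ω => (X ω, Y ω)) (a, b) = P.prob X a * P.prob Y b) :
    P.condH X Y = P.H X := by
  rw [condH, sub_eq_iff_eq_add]
  simp only [H_eq_sum_negMulLog, Fintype.sum_prod_type, h, negMulLog_mul, ← add_div,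
    sum_add_distrib, ← sum_mul, ← mul_sum, sum_prob, one_mul]

theorem condH_eq_add_of_condH_eq_zero {W : P.Ω → α} {A : P.Ω → β} (hWA : P.condH W A = 0)
    (Z : P.Ω → γ) : P.condH A Z = P.condH W Z + P.condH A (fun ω => (W ω, Z ω)) := by
  have hW : P.condH W (fun ω => (A ω, Z ω)) = 0 :=
    (hWA ▸ condH_pair_le_left W A Z).antisymm (condH_nonneg _ _)
  have hswap : P.H (fun ω => (A ω, W ω, Z ω)) = P.H (fun ω => (W ω, A ω, Z ω)) :=
    H_congr (fun t => (t.2.1, t.1, t.2.2)) (fun t => (t.2.1, t.1, t.2.2))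
      (fun _ => rfl) fun _ => rfl
  rw [condH] at hW
  rw [condH, condH, condH, hswap]
  linarith

section Independence

variable {ι V : Type} [Fintype ι] [DecidableEq ι] [DecidableEq V] {W : ι → P.Ω → V}

theorem iIndep.sum_prob_piFinset (hW : P.iIndep W) (S : ι → Finset V) :
    ∑ a ∈ Fintype.piFinset S, P.prob (P.tuple W) a = ∏ i, ∑ v ∈ S i, P.prob (W i) v := by
  rw [prod_univ_sum]
  exact sum_congr rfl fun a _ => hW a

theorem iIndep.prob_pair_restrict_eq_mul [Fintype V] (hW : P.iIndep W) {p : ι → Prop}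
    [DecidablePred p] {j : ι} (hj : ¬ p j) (x : V) (g : {i // p i} → V) :
    P.prob (fun ω => (W j ω, P.tuple (fun i : {i // p i} => W i) ω)) (x, g) =
      P.prob (W j) x * P.prob (P.tuple fun i : {i // p i} => W i) g := by
  set S : ι → Finset V := fun i => if h : p i then {g ⟨i, h⟩} else univ
  have hrestrict : P.prob (P.tuple fun i : {i // p i} => W i) g =
      ∑ a ∈ Fintype.piFinset S, P.prob (P.tuple W) a := by
    refine (prob_eq_sum_prob_fiber (X := P.tuple W) (fun a (i : {i // p i}) => a i.1)
      (fun _ => rfl) g).trans (sum_congr ?_ fun _ _ => rfl)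
    ext a
    simp only [S, mem_filter, mem_univ, true_and, Fintype.mem_piFinset, funext_iff,
      Subtype.forall]
    refine forall_congr' fun i => ?_
    split_ifs with hi <;> simp [hi]
  have hpair : P.prob (fun ω => (W j ω, P.tuple (fun i : {i // p i} => W i) ω)) (x, g) =
      ∑ a ∈ Fintype.piFinset (Function.update S j {x}), P.prob (P.tuple W) a := by
    refine (prob_eq_sum_prob_fiber (X := P.tuple W) (fun a => (a j, fun i : {i // p i} => a i.1))
      (fun _ => rfl) (x, g)).trans (sum_congr ?_ fun _ _ => rfl)
    ext a
    simp only [S, mem_filter, mem_univ, true_and, Fintype.mem_piFinset, funext_iff,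
      Subtype.forall, Prod.mk.injEq, Function.update_apply]
    constructor
    · rintro ⟨rfl, hg⟩ i
      split_ifs with hij hi <;> simp_all
    · intro h
      refine ⟨by simpa using h j, fun i hi => ?_⟩
      have hij : i ≠ j := fun h' => hj (h' ▸ hi)
      simpa [hij, hi] using h i
  rw [hpair, hrestrict, hW.sum_prob_piFinset, hW.sum_prob_piFinset,
    Fintype.prod_eq_mul_prod_compl j, Fintype.prod_eq_mul_prod_compl j]
  simp only [Function.update_self, sum_singleton, S, dif_neg hj, sum_prob, one_mul]
  refine congrArg _ (prod_congr rfl fun i hi => ?_)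
  rw [Function.update_of_ne (by simpa using hi)]

theorem iIndep.condH_restrict_eq_H [Fintype V] (hW : P.iIndep W) {p : ι → Prop}
    [DecidablePred p] {j : ι} (hj : ¬ p j) :
    P.condH (W j) (P.tuple fun i : {i // p i} => W i) = P.H (W j) :=
  condH_eq_H_of_prob_pair_eq_mul (hW.prob_pair_restrict_eq_mul hj)

end Independence

end FinProbSpace

/-! ## The converse bound -/

theorem mul_geom_sum_le_of_add_mul_le {a r : ℝ} (hr : 0 ≤ r) :
    ∀ {K : ℕ} {G : ℕ → ℝ}, (∀ j, 0 ≤ G j) → (∀ j < K, a + r * G (j + 1) ≤ G j) →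
      a * ∑ i ∈ range K, r ^ i ≤ G 0
  | 0, G, hG, _ => by simpa using hG 0
  | K + 1, G, hG, hstep => by
    have ih : a * ∑ i ∈ range K, r ^ i ≤ G 1 :=
      mul_geom_sum_le_of_add_mul_le hr (fun j => hG (j + 1)) fun j hj => hstep (j + 1) (by omega)
    calc a * ∑ i ∈ range (K + 1), r ^ i = a + r * (a * ∑ i ∈ range K, r ^ i) := by
          rw [geom_sum_succ]; ring
      _ ≤ a + r * G 1 := by gcongr
      _ ≤ G 0 := hstep 0 (by omega)

theorem sum_mul_sum_apply_eq_sum_sum_fiber {ι : Type*} [Fintype ι] {κ : ι → Type*}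
    [∀ i, Fintype (κ i)] [∀ i, DecidableEq (κ i)] (Q : Finset ((i : ι) → κ i))
    (μ : ((i : ι) → κ i) → ℝ) (c : (i : ι) → κ i → ℝ) :
    ∑ q ∈ Q, μ q * ∑ i, c i (q i) = ∑ i, ∑ m, (∑ q ∈ Q with q i = m, μ q) * c i m := by
  simp only [mul_sum]
  rw [sum_comm]
  refine sum_congr rfl fun i _ => ?_
  rw [← sum_fiberwise Q (fun q => q i)]
  refine sum_congr rfl fun m _ => ?_
  rw [sum_mul]
  exact sum_congr rfl fun q hq => by rw [(mem_filter.mp hq).2]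

namespace IRScheme

open FinProbSpace

variable {K N : ℕ} {Mn : Fin N → ℕ} {Lw Lx : ℝ} (C : IRScheme K N Mn Lw Lx)

def msgPrefix (j : ℕ) : C.P.Ω → {i : Fin K // i.1 < j} → C.V :=
  C.P.tuple fun i : {i : Fin K // i.1 < j} => C.W i

def answers (q : (n : Fin N) → Fin (Mn n)) : C.P.Ω → Fin N → C.V' :=
  C.P.tuple fun n => C.A n (q n)

theorem condH_answers_msgPrefix {j : ℕ} (hj : j < K) {q : (n : Fin N) → Fin (Mn n)}
    (hq : q ∈ C.Q ⟨j, hj⟩) :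
    C.P.condH (C.answers q) (C.msgPrefix j) =
      Lw + C.P.condH (C.answers q) (C.msgPrefix (j + 1)) := by
  have hW : C.P.condH (C.W ⟨j, hj⟩) (C.msgPrefix j) = Lw :=
    (C.indep.condH_restrict_eq_H (p := fun i => i.1 < j) (lt_irrefl j)).trans (C.HW _)
  rw [condH_eq_add_of_condH_eq_zero (A := C.answers q) (C.decodes _ q hq), hW]
  congr 1
  refine condH_congr_right
    (fun u i => if h : i.1.1 < j then u.2 ⟨i.1, h⟩ else u.1)
    (fun t => (t ⟨⟨j, hj⟩, j.lt_succ_self⟩, fun i => t ⟨i.1, Nat.lt_succ_of_lt i.2⟩))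
    (fun ω => funext fun i => ?_) fun _ => rfl
  by_cases h : i.1.1 < j
  · simp [h, msgPrefix, tuple]
  · have : i.1 = ⟨j, hj⟩ := Fin.ext (by have := i.2; simp at h ⊢; omega)
    simp [msgPrefix, tuple, this]

theorem condH_answer_add_le {j : ℕ} (hj : j < K) {q : (n : Fin N) → Fin (Mn n)}
    (hq : q ∈ C.Q ⟨j, hj⟩) (n : Fin N) :
    Lw + C.P.condH (C.A n (q n)) (C.msgPrefix (j + 1)) ≤
      ∑ n', C.P.condH (C.A n' (q n')) (C.msgPrefix j) :=
  calc Lw + C.P.condH (C.A n (q n)) (C.msgPrefix (j + 1))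
      ≤ Lw + C.P.condH (C.answers q) (C.msgPrefix (j + 1)) :=
        add_le_add le_rfl (condH_le_of_eq_comp (X' := C.answers q) (fun t => t n) (fun _ => rfl) _)
    _ = C.P.condH (C.answers q) (C.msgPrefix j) := (C.condH_answers_msgPrefix hj hq).symm
    _ ≤ ∑ n', C.P.condH (C.A n' (q n')) (C.msgPrefix j) :=
        condH_tuple_le_sum (fun n => C.A n (q n)) _

variable {C}

theorem IsRIR.mul_geom_sum_le (hC : C.IsRIR) (hK : 0 < K) (hN : 0 < N) :
    Lw * ∑ i ∈ range K, (1 / (N : ℝ)) ^ i ≤ N * Lx := by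
  obtain ⟨q₀, -⟩ := C.Q_nonempty ⟨0, hK⟩
  have hne : (univ : Finset (Σ n, Fin (Mn n))).Nonempty := ⟨⟨⟨0, hN⟩, q₀ _⟩, mem_univ _⟩
  set g : ℕ → ℝ := fun j => univ.sup' hne fun σ => C.P.condH (C.A σ.1 σ.2) (C.msgPrefix j)
  have hNpos : (0 : ℝ) < N := by exact_mod_cast hN
  refine le_trans (mul_geom_sum_le_of_add_mul_le (G := fun j => N * g j) (by positivity)
    (fun j => ?_) fun j hj => ?_) ?_
  · obtain ⟨σ, hσ⟩ := hne
    exact mul_nonneg hNpos.le ((condH_nonneg _ _).trans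
      (le_sup' (fun σ : Σ n, Fin (Mn n) => C.P.condH (C.A σ.1 σ.2) (C.msgPrefix j)) hσ))
  · obtain ⟨σ, -, hσ⟩ := exists_mem_eq_sup' hne
      fun σ => C.P.condH (C.A σ.1 σ.2) (C.msgPrefix (j + 1))
    -- repudiation puts the worst answer `σ` into a decoding set of message `j`
    obtain ⟨q, hq, hqσ⟩ := hC σ.1 σ.2 ⟨j, hj⟩
    have hstep := C.condH_answer_add_le hj hq σ.1
    have hsum : ∑ n, C.P.condH (C.A n (q n)) (C.msgPrefix j) ≤ N * g j := by
      simpa using sum_le_card_nsmul univ _ (g j) fun n _ =>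
        le_sup' (fun σ : Σ n, Fin (Mn n) => C.P.condH (C.A σ.1 σ.2) (C.msgPrefix j))
          (mem_univ ⟨n, q n⟩)
    rw [hqσ] at hstep
    simp only [g, hσ]
    field_simp
    linarith
  · simp only [mul_le_mul_iff_right₀ hNpos]
    exact sup'_le _ _ fun σ _ => (condH_le_H _ _).trans (C.HA σ.1 σ.2).le

theorem IsPIR.mul_geom_sum_le (hC : C.IsPIR) (hK : 0 < K) (hN : 0 < N) :
    Lw * ∑ i ∈ range K, (1 / (N : ℝ)) ^ i ≤ N * Lx := by
  obtain ⟨μ, hμ0, hμ1, hμ⟩ := hC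
  set G : Fin K → ℕ → ℝ := fun k j =>
    ∑ q ∈ C.Q k, μ k q * ∑ n, C.P.condH (C.A n (q n)) (C.msgPrefix j)
  -- privacy: `G k j` only depends on the laws of the `q n` under `μ k`, which do not depend on `k`
  have hG : ∀ k k' j, G k j = G k' j := fun k k' j => by
    simp only [G]
    rw [sum_mul_sum_apply_eq_sum_sum_fiber _ _ fun n m => C.P.condH (C.A n m) (C.msgPrefix j),
      sum_mul_sum_apply_eq_sum_sum_fiber _ _ fun n m => C.P.condH (C.A n m) (C.msgPrefix j)]
    simp only [hμ k k']
  have hNpos : (0 : ℝ) < N := by exact_mod_cast hN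
  refine le_trans (mul_geom_sum_le_of_add_mul_le (G := G ⟨0, hK⟩) (by positivity)
    (fun j => ?_) fun j hj => ?_) ?_
  · exact sum_nonneg fun q _ => mul_nonneg (hμ0 _ q) (sum_nonneg fun n _ => condH_nonneg _ _)
  · rw [hG ⟨0, hK⟩ ⟨j, hj⟩ (j + 1), hG ⟨0, hK⟩ ⟨j, hj⟩ j]
    have hstep : ∀ q ∈ C.Q ⟨j, hj⟩, Lw + 1 / N * ∑ n, C.P.condH (C.A n (q n)) (C.msgPrefix (j + 1))
        ≤ ∑ n, C.P.condH (C.A n (q n)) (C.msgPrefix j) := fun q hq => by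
      have := sum_le_sum fun n (_ : n ∈ univ) => C.condH_answer_add_le hj hq n
      simp only [sum_add_distrib, sum_const, card_univ, Fintype.card_fin, nsmul_eq_mul] at this
      field_simp
      linarith
    calc Lw + 1 / N * G ⟨j, hj⟩ (j + 1) = ∑ q ∈ C.Q ⟨j, hj⟩, μ ⟨j, hj⟩ q *
          (Lw + 1 / N * ∑ n, C.P.condH (C.A n (q n)) (C.msgPrefix (j + 1))) := by
          simp only [G, mul_add, sum_add_distrib, ← sum_mul, hμ1, mul_sum]
          ring_nf
      _ ≤ G ⟨j, hj⟩ j := sum_le_sum fun q hq => mul_le_mul_of_nonneg_left (hstep q hq) (hμ0 _ q)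
  · calc G ⟨0, hK⟩ 0 ≤ ∑ q ∈ C.Q ⟨0, hK⟩, μ ⟨0, hK⟩ q * ∑ n : Fin N, Lx := by
          refine sum_le_sum fun q _ => mul_le_mul_of_nonneg_left (sum_le_sum fun n _ => ?_)
            (hμ0 _ q)
          exact (condH_le_H _ _).trans (C.HA n (q n)).le
      _ = N * Lx := by simp [← sum_mul, hμ1]

end IRScheme

/-! ## A capacity-achieving scheme -/

namespace FinProbSpace

def uniform (Ω : Type) [Fintype Ω] [Nonempty Ω] : FinProbSpace where
  Ω := Ω
  p _ := (Fintype.card Ω : ℝ)⁻¹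
  nonneg _ := by positivity
  sum_one := by simp

variable {Ω β : Type} [Fintype Ω] [AddCommGroup Ω] [Fintype β] [AddCommGroup β] [DecidableEq β]

theorem prob_uniform_of_surjective (φ : Ω →+ β) (hφ : Function.Surjective φ) (b : β) :
    (uniform Ω).prob φ b = (Fintype.card β : ℝ)⁻¹ := by
  have hfiber : ∀ b', #{ω | φ ω = b'} = #{ω | φ ω = b} := fun b' =>
    AddMonoidHom.card_fiber_eq_of_mem_range φ (hφ b') (hφ b)
  have hcard : Fintype.card Ω = Fintype.card β * #{ω | φ ω = b} := by
    rw [← card_univ, card_eq_sum_card_fiberwise (f := φ) (t := univ) fun _ _ => mem_univ _]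
    simp [hfiber]
  have hβ : (Fintype.card β : ℝ) ≠ 0 := by positivity
  have hb : (#{ω | φ ω = b} : ℝ) ≠ 0 := by
    have : Fintype.card Ω ≠ 0 := Fintype.card_ne_zero
    rw [hcard] at this
    exact_mod_cast right_ne_zero_of_mul this
  simp only [prob, uniform, ← sum_filter, sum_const, nsmul_eq_mul, hcard]
  push_cast
  field_simp
  rfl

theorem H_uniform_of_surjective (φ : Ω →+ β) (hφ : Function.Surjective φ) :
    (uniform Ω).H φ = logb 2 (Fintype.card β) := by
  simp only [H, prob_uniform_of_surjective φ hφ, sum_const, card_univ, nsmul_eq_mul, logb_inv]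
  have : (Fintype.card β : ℝ) ≠ 0 := by positivity
  field_simp

theorem iIndep_uniform_eval {ι G : Type} [Fintype ι] [DecidableEq ι] [Fintype G]
    [AddCommGroup G] [DecidableEq G] : (uniform (ι → G)).iIndep fun i ω => ω i := by
  intro a
  calc (uniform (ι → G)).prob (⇑(AddMonoidHom.id (ι → G))) a
        = ∏ _i : ι, (Fintype.card G : ℝ)⁻¹ := by
          rw [prob_uniform_of_surjective _ Function.surjective_id]
          simp
    _ = _ := prod_congr rfl fun i _ => (prob_uniform_of_surjective
        (Pi.evalAddMonoidHom (fun _ => G) i) (Function.surjective_eval i) (a i)).symm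

end FinProbSpace

theorem logb_two_card_fun_zmod_two (τ : Type) [Fintype τ] [DecidableEq τ] :
    logb 2 (Fintype.card (τ → ZMod 2)) = Fintype.card τ := by
  simp [logb_pow]

theorem CK_eq_div {K N : ℕ} (hN : 2 ≤ N) :
    CK N K = ((N - 1) * N ^ K : ℝ) / (N * (N ^ K - 1)) := by
  have hN' : (2 : ℝ) ≤ N := by exact_mod_cast hN
  have hx : 1 / (N : ℝ) ≠ 1 := by rw [ne_eq, div_eq_one_iff_eq] <;> linarith
  have hN0 : (N : ℝ) ≠ 0 := by positivity
  rw [CK, geom_sum_eq hx, inv_div, div_pow, one_pow, ← neg_div_neg_eq, neg_sub, neg_sub,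
    one_sub_div hN0, one_sub_div (pow_ne_zero K hN0), div_div_div_eq, mul_comm (N : ℝ)]

namespace LineScheme

variable (K N : ℕ)

abbrev Query : Type := Fin K → ZMod N

abbrev Symbol : Type := {c : ZMod N // c ≠ 0} × Query K N

abbrev Message : Type := Symbol K N → ZMod 2

abbrev Answer : Type := {e : Query K N // e ≠ 0} → ZMod 2

variable {K N}

def answerBit (m e : Query K N) (ω : Fin K → Message K N) : ZMod 2 :=
  ∑ k, if h : e k = 0 then 0 else ω k (⟨e k, h⟩, m + Function.update e k 0)

def answer (m : Query K N) : (Fin K → Message K N) →+ Answer K N where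
  toFun ω e := answerBit m e ω
  map_zero' := by ext; simp [answerBit]
  map_add' ω ω' := by
    ext e
    simp only [answerBit, Pi.add_apply, ← sum_add_distrib]
    exact sum_congr rfl fun k _ => by split_ifs <;> simp

theorem answerBit_sub_answerBit (ω : Fin K → Message K N) {m e : Query K N} {k : Fin K}
    (he : e k ≠ 0) :
    answerBit m e ω - answerBit (m + Pi.single k (e k)) (Function.update e k 0) ω =
      ω k (⟨e k, he⟩, m + Function.update e k 0) := by
  rw [answerBit, answerBit, ← sum_sub_distrib, sum_eq_single k]
  · simp [he]
  · intro k' _ hk'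
    by_cases h : e k' = 0
    · simp [h, Function.update_of_ne hk']
    · have hidx : m + Pi.single k (e k) + Function.update (Function.update e k 0) k' 0 =
          m + Function.update e k' 0 := by
        ext i
        by_cases hik : i = k <;> by_cases hik' : i = k' <;>
          simp [Function.update_apply, Pi.single_apply, hik, hik'] <;> simp_all
      simp [h, Function.update_of_ne hk', hidx]
  · simp

theorem answer_surjective (m : Query K N) : Function.Surjective (answer m) := by
  intro t
  -- each bit `t e` is planted in the summand of `answerBit m e` at one chosen coordinate `lead e`
  choose lead hlead using fun e : {e : Query K N // e ≠ 0} => Function.ne_iff.mp e.2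
  have hne : ∀ (k : Fin K) (s : Symbol K N), Function.update (s.2 - m) k s.1.1 ≠ 0 := fun k s h =>
    s.1.2 (by simpa using congrFun h k)
  refine ⟨fun k s => if lead ⟨_, hne k s⟩ = k then t ⟨_, hne k s⟩ else 0, funext fun e => ?_⟩
  have hrec : ∀ k (h : e.1 k ≠ 0),
      (⟨_, hne k (⟨e.1 k, h⟩, m + Function.update e.1 k 0)⟩ : {e : Query K N // e ≠ 0}) = e :=
    fun k h => Subtype.ext (by ext i; by_cases hi : i = k <;> simp [hi])
  have hterm : ∀ k, (if h : e.1 k = 0 then 0 else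
      (if lead ⟨_, hne k (⟨e.1 k, h⟩, m + Function.update e.1 k 0)⟩ = k
        then t ⟨_, hne k (⟨e.1 k, h⟩, m + Function.update e.1 k 0)⟩ else 0)) =
      if lead e = k then t e else 0 := fun k => by
    by_cases h : e.1 k = 0
    · rw [dif_pos h, if_neg]
      rintro rfl
      exact hlead e h
    · rw [dif_neg h, hrec k h]
  simp only [answer, AddMonoidHom.coe_mk, ZeroHom.coe_mk, answerBit]
  rw [sum_congr rfl fun k _ => hterm k, sum_ite_eq]
  simp

def readBit (t : Answer K N) (e : Query K N) : ZMod 2 := if h : e = 0 then 0 else t ⟨e, h⟩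

theorem readBit_answer (m e : Query K N) (ω : Fin K → Message K N) :
    readBit (answer m ω) e = answerBit m e ω := by
  unfold readBit
  split_ifs with h
  · simp [h, answerBit]
  · rfl

variable [NeZero N]

def line (k : Fin K) (h : Query K N) (n : Fin N) : Query K N :=
  h + Pi.single k (ZMod.finEquiv N n)

/-- The symbol `(c, u)` of message `k` is the difference of two answer bits, read at the points
of the line through `h` in direction `k` whose `k`-th coordinates are `u k` and `u k + c`. -/
def decoder (k : Fin K) (h : Query K N) (t : Fin N → Answer K N) : Message K N := fun s =>
  readBit (t ((ZMod.finEquiv N).symm (s.2 k - h k))) (Function.update (s.2 - h) k s.1) -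
    readBit (t ((ZMod.finEquiv N).symm (s.2 k - h k + s.1))) (Function.update (s.2 - h) k 0)

theorem decoder_answer_line (k : Fin K) (h : Query K N) (ω : Fin K → Message K N) :
    decoder k h (fun n => answer (line k h n) ω) = ω k := by
  funext ⟨c, u⟩
  set e := Function.update (u - h) k c.1
  have he : e k ≠ 0 := by simpa [e] using c.2
  have key := answerBit_sub_answerBit ω (m := h + Pi.single k (u k - h k)) he
  have hc : (⟨e k, he⟩ : {c : ZMod N // c ≠ 0}) = c := Subtype.ext (by simp [e])
  have hu : h + Pi.single k (u k - h k) + Function.update (u - h) k 0 = u := by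
    ext i; by_cases hi : i = k <;> simp [hi]
  have hline : h + Pi.single k (u k - h k) + Pi.single k (e k) =
      h + Pi.single k (u k - h k + c.1) := by
    simp [e, add_assoc, Pi.single_add]
  simp only [hc, hu, hline, e, Function.update_idem] at key
  simp only [decoder, line, RingEquiv.apply_symm_apply, readBit_answer]
  exact key

variable (K N) in
open FinProbSpace in
def lineScheme : IRScheme K N (fun _ => Fintype.card (Query K N)) (Fintype.card (Symbol K N))
    (Fintype.card {e : Query K N // e ≠ 0}) where
  P := uniform (Fin K → Message K N)
  V := Message K N
  V' := Answer K N
  W k ω := ω k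
  A _ m := answer ((Fintype.equivFin _).symm m)
  indep := iIndep_uniform_eval
  HW k := (H_uniform_of_surjective (Pi.evalAddMonoidHom (fun _ => Message K N) k)
    (Function.surjective_eval k)).trans (logb_two_card_fun_zmod_two _)
  ans_fn _ m := ⟨answer ((Fintype.equivFin _).symm m), fun _ => rfl⟩
  HA _ m := (H_uniform_of_surjective _ (answer_surjective _)).trans (logb_two_card_fun_zmod_two _)
  Q k := univ.image fun h n => Fintype.equivFin _ (line k h n)
  Q_nonempty _ := univ_nonempty.image _
  decodes k q hq := by
    obtain ⟨h, -, rfl⟩ := mem_image.mp hq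
    refine condH_eq_zero_of_eq_comp (decoder k h) fun ω => ?_
    simp only [Equiv.symm_apply_apply]
    exact (decoder_answer_line k h ω).symm

theorem line_injective (k : Fin K) :
    Function.Injective fun h (n : Fin N) => Fintype.equivFin (Query K N) (line k h n) := by
  intro h h' hh
  simpa [line] using congrFun hh 0

theorem card_filter_Q (k : Fin K) (n : Fin N) (m : Fin (Fintype.card (Query K N))) :
    #{q ∈ (lineScheme K N).Q k | q n = m} = 1 := by
  simp only [lineScheme]
  rw [filter_image, card_image_of_injective _ (line_injective k), card_eq_one]
  refine ⟨(Fintype.equivFin _).symm m - Pi.single k (ZMod.finEquiv N n), ?_⟩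
  ext h
  simp [line, ← Equiv.eq_symm_apply, eq_sub_iff_add_eq]

theorem lineScheme_isRIR : (lineScheme K N).IsRIR := fun n m k => by
  obtain ⟨q, hq⟩ := card_pos.mp ((card_filter_Q k n m).symm ▸ Nat.one_pos)
  exact ⟨q, (mem_filter.mp hq).1, (mem_filter.mp hq).2⟩

theorem lineScheme_isPIR : (lineScheme K N).IsPIR := by
  refine ⟨fun _ _ => (Fintype.card (Query K N) : ℝ)⁻¹, fun _ _ => by positivity, fun k => ?_,
    fun k k' n m => by simp only [sum_const, card_filter_Q]⟩
  simp only [sum_const, nsmul_eq_mul, lineScheme]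
  rw [card_image_of_injective _ (line_injective k), card_univ]
  field_simp

theorem card_symbol : Fintype.card (Symbol K N) = (N - 1) * N ^ K := by
  simp [Fintype.card_subtype_compl]

theorem card_nonzero_query : Fintype.card {e : Query K N // e ≠ 0} = N ^ K - 1 := by
  simp [Fintype.card_subtype_compl]

theorem card_symbol_pos (hN : 2 ≤ N) : (0 : ℝ) < Fintype.card (Symbol K N) := by
  rw [card_symbol]
  exact_mod_cast Nat.mul_pos (by omega) (by positivity)

theorem card_nonzero_query_pos (hK : 0 < K) (hN : 2 ≤ N) :
    (0 : ℝ) < Fintype.card {e : Query K N // e ≠ 0} := by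
  rw [card_nonzero_query]
  exact_mod_cast Nat.sub_pos_of_lt (Nat.one_lt_pow hK.ne' (by omega))

theorem CK_eq_rate (hN : 2 ≤ N) :
    CK N K = Fintype.card (Symbol K N) / (N * Fintype.card {e : Query K N // e ≠ 0}) := by
  rw [card_symbol, card_nonzero_query, CK_eq_div hN, Nat.cast_mul, Nat.cast_sub (by omega),
    Nat.cast_sub (Nat.one_le_pow _ _ (by omega))]
  push_cast
  ring

end LineScheme

theorem div_le_CK_of_mul_geom_sum_le {K N : ℕ} {Lw Lx : ℝ} (hK : 0 < K) (hN : 0 < N)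
    (hLx : 0 < Lx) (h : Lw * ∑ i ∈ range K, (1 / (N : ℝ)) ^ i ≤ N * Lx) :
    Lw / (N * Lx) ≤ CK N K := by
  have hsum : 0 < ∑ i ∈ range K, (1 / (N : ℝ)) ^ i :=
    sum_pos (fun i _ => by positivity) (nonempty_range_iff.mpr hK.ne')
  rw [CK, div_le_iff₀ (by positivity), inv_mul_eq_div, le_div_iff₀ hsum]
  linarith

/-- Capacity of RIR_max, Corollary 2: for `N ≥ 2`, `K ≥ 1`, the supremum
of the rate `Lw / (N Lx)` over all RIR_max schemes equals `C_K(N)` and is attained; the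
same holds for PIR_max schemes, so the capacity of RIR_max equals the capacity of PIR_max. -/
theorem rir_capacity (K N : ℕ) (hK : 1 ≤ K) (hN : 2 ≤ N) :
    IsGreatest {r : ℝ | ∃ (Mn : Fin N → ℕ) (Lw Lx : ℝ), 0 < Lw ∧ 0 < Lx ∧
      ∃ C : IRScheme K N Mn Lw Lx, C.IsRIR ∧ r = Lw / (N * Lx)} (CK N K) ∧
    IsGreatest {r : ℝ | ∃ (Mn : Fin N → ℕ) (Lw Lx : ℝ), 0 < Lw ∧ 0 < Lx ∧
      ∃ C : IRScheme K N Mn Lw Lx, C.IsPIR ∧ r = Lw / (N * Lx)} (CK N K) := by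
  have : NeZero N := ⟨by omega⟩
  have hLw := LineScheme.card_symbol_pos (K := K) hN
  have hLx := LineScheme.card_nonzero_query_pos hK hN
  have hrate := LineScheme.CK_eq_rate (K := K) hN
  refine ⟨⟨⟨_, _, _, hLw, hLx, _, LineScheme.lineScheme_isRIR, hrate⟩, ?_⟩,
    ⟨⟨_, _, _, hLw, hLx, _, LineScheme.lineScheme_isPIR, hrate⟩, ?_⟩⟩
  · rintro r ⟨Mn, Lw, Lx, -, hLx, C, hC, rfl⟩
    exact div_le_CK_of_mul_geom_sum_le hK (by omega) hLx (hC.mul_geom_sum_le hK (by omega))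
  · rintro r ⟨Mn, Lw, Lx, -, hLx, C, hC, rfl⟩
    exact div_le_CK_of_mul_geom_sum_le hK (by omega) hLx (hC.mul_geom_sum_le hK (by omega))
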